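/- For the implicit Euler step of the heat flow: let ν, τ > 0 and let f, w ∈ H²(𝕋) satisfy (w − f)/τ = ν∂ₓₓw + g for some g ∈ L²(𝕋). Then (ν/2)‖∂ₓw‖²_{L²} − (ν/2)‖∂ₓf‖²_{L²} + (1/τ)‖w − f‖²_{L²} ≤ ∫_𝕋 g(w − f) dx. -/

import Mathlib

open MeasureTheory intervalIntegral

/-! With `g = (w - f)/τ - ν w''`, the right-hand side is
`(1/τ)‖w - f‖² - ν ∫ w'' (w - f)`. Integrating by parts over a period (the boundary terms
cancel by periodicity) turns `-∫ w'' (w - f)` into `∫ w' (w' - f')`, and the pointwise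
identity `a (a - b) = (a² - b²)/2 + (a - b)²/2` bounds this from below by
`(‖w'‖² - ‖f'‖²)/2`. -/

theorem Function.Periodic.periodic_of_hasDerivAt {E : Type*} [NormedAddCommGroup E]
    [NormedSpace ℝ E] {u u' : ℝ → E} {T : ℝ} (hu : Function.Periodic u T)
    (hu' : ∀ x, HasDerivAt u (u' x) x) :
    Function.Periodic u' T := fun x => by
  have h := (hu' (x + T)).comp_add_const x T
  rw [show (fun y => u (y + T)) = u from funext hu] at h
  exact h.unique (hu' x)

theorem integral_mul_deriv_eq_neg_integral_deriv_mul_of_periodic {u u' v v' : ℝ → ℝ}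
    {a T : ℝ} (hu : Function.Periodic u T) (hv : Function.Periodic v T)
    (hu' : ∀ x, HasDerivAt u (u' x) x) (hv' : ∀ x, HasDerivAt v (v' x) x)
    (hiu' : IntervalIntegrable u' volume a (a + T))
    (hiv' : IntervalIntegrable v' volume a (a + T)) :
    ∫ x in a..a + T, u x * v' x = -∫ x in a..a + T, u' x * v x := by
  rw [integral_mul_deriv_eq_deriv_mul (fun x _ => hu' x) (fun x _ => hv' x) hiu' hiv',
    hu a, hv a]
  ring

theorem integral_sq_sub_integral_sq_le_two_mul_integral_mul_sub {a b : ℝ → ℝ} {s t : ℝ}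
    (hst : s ≤ t) (ha : Continuous a) (hb : Continuous b) :
    (∫ x in s..t, a x ^ 2) - ∫ x in s..t, b x ^ 2 ≤ 2 * ∫ x in s..t, a x * (a x - b x) := by
  have hint : ∀ {φ : ℝ → ℝ}, Continuous φ → IntervalIntegrable φ volume s t :=
    fun hφ => hφ.intervalIntegrable _ _
  rw [← intervalIntegral.integral_sub (hint (by fun_prop : Continuous fun x => a x ^ 2))
      (hint (by fun_prop : Continuous fun x => b x ^ 2)),
    ← intervalIntegral.integral_const_mul]
  refine integral_mono_on hst (hint (by fun_prop)) (hint (by fun_prop)) fun x _ => ?_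
  nlinarith [sq_nonneg (a x - b x)]

theorem implicit_euler_energy_estimate_general (ν τ : ℝ) (hν : 0 < ν)
    (f f' w w' w'' g : ℝ → ℝ)
    (hfp : Function.Periodic f (2 * Real.pi))
    (hwp : Function.Periodic w (2 * Real.pi))
    (hf' : ∀ x, HasDerivAt f (f' x) x)
    (hw' : ∀ x, HasDerivAt w (w' x) x)
    (hw'' : ∀ x, HasDerivAt w' (w'' x) x)
    (hcf' : Continuous f') (hcw' : Continuous w') (hcw'' : Continuous w'')
    (heq : ∀ x, (w x - f x) / τ = ν * w'' x + g x) :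
    ν / 2 * (∫ x in (0:ℝ)..(2 * Real.pi), (w' x)^2)
      - ν / 2 * (∫ x in (0:ℝ)..(2 * Real.pi), (f' x)^2)
      + (1/τ) * (∫ x in (0:ℝ)..(2 * Real.pi), (w x - f x)^2)
      ≤ ∫ x in (0:ℝ)..(2 * Real.pi), g x * (w x - f x) := by
  have hcf : Continuous f := Differentiable.continuous fun x => (hf' x).differentiableAt
  have hcw : Continuous w := Differentiable.continuous fun x => (hw' x).differentiableAt
  have hg : ∀ x, g x * (w x - f x) = 1 / τ * (w x - f x) ^ 2 - ν * (w'' x * (w x - f x)) := by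
    intro x
    rw [eq_sub_of_add_eq' (heq x).symm]
    ring
  have hparts : ∫ x in (0:ℝ)..2 * Real.pi, w' x * (w' x - f' x)
      = -∫ x in (0:ℝ)..2 * Real.pi, w'' x * (w x - f x) := by
    simpa only [zero_add, Pi.sub_apply] using
      integral_mul_deriv_eq_neg_integral_deriv_mul_of_periodic (a := 0)
        (hwp.periodic_of_hasDerivAt hw') (hwp.sub hfp) hw'' (fun x => (hw' x).sub (hf' x))
        (hcw''.intervalIntegrable _ _) ((hcw'.sub hcf').intervalIntegrable _ _)
  have hconvex := integral_sq_sub_integral_sq_le_two_mul_integral_mul_sub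
    Real.two_pi_pos.le hcw' hcf'
  rw [hparts] at hconvex
  rw [integral_congr fun x _ => hg x,
    intervalIntegral.integral_sub
      ((by fun_prop : Continuous fun x => 1 / τ * (w x - f x) ^ 2).intervalIntegrable _ _)
      ((by fun_prop : Continuous fun x => ν * (w'' x * (w x - f x))).intervalIntegrable _ _),
    intervalIntegral.integral_const_mul, intervalIntegral.integral_const_mul]
  linarith [mul_le_mul_of_nonneg_left hconvex hν.le]

/-- Discrete energy estimate for the implicit Euler step of the heat
flow on the `2π`-periodic torus (realized as `2π`-periodic functions on `ℝ`):
if `(w − f)/τ = ν ∂ₓₓ w + g`, then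
`(ν/2)‖∂ₓw‖² − (ν/2)‖∂ₓf‖² + (1/τ)‖w − f‖² ≤ ∫ g (w − f)`. -/
theorem implicit_euler_energy_estimate (ν τ : ℝ) (hν : 0 < ν) (hτ : 0 < τ)
    (f f' w w' w'' g : ℝ → ℝ)
    (hfp : Function.Periodic f (2 * Real.pi))
    (hwp : Function.Periodic w (2 * Real.pi))
    (hf' : ∀ x, HasDerivAt f (f' x) x)
    (hw' : ∀ x, HasDerivAt w (w' x) x)
    (hw'' : ∀ x, HasDerivAt w' (w'' x) x)
    (hcf' : Continuous f') (hcw' : Continuous w') (hcw'' : Continuous w'')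
    (hgi : IntervalIntegrable (fun x => g x * (w x - f x)) volume 0 (2 * Real.pi))
    (heq : ∀ x, (w x - f x) / τ = ν * w'' x + g x) :
    ν / 2 * (∫ x in (0:ℝ)..(2 * Real.pi), (w' x)^2)
      - ν / 2 * (∫ x in (0:ℝ)..(2 * Real.pi), (f' x)^2)
      + (1/τ) * (∫ x in (0:ℝ)..(2 * Real.pi), (w x - f x)^2)
      ≤ ∫ x in (0:ℝ)..(2 * Real.pi), g x * (w x - f x) :=
  implicit_euler_energy_estimate_general ν τ hν f f' w w' w'' g hfp hwp hf' hw' hw'' hcf' hcw' hcw''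
    heq
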